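/- Let R ∈ ℂ^{n×n} be a unitary k-upper Hessenberg matrix and let U ∈ ℂ^{n×n} be unitary. Then there exist unitary matrices V and S such that RU = VS, where S is a unitary k-upper Hessenberg matrix and V is block diagonal of the form V = diag(I_k, V̂) with V̂ ∈ ℂ^{(n−k)×(n−k)} unitary. -/

import Mathlib

/-!
Put `A = R * U` and run Gram–Schmidt on `e₀, …, e_{k-1}, A₀, …, A_{n-k-1}` (standard unit vectors,
then the leading columns of `A`), completing to an orthonormal basis `b`. Gram–Schmidt fixes the
orthonormal prefix, so `bⱼ = eⱼ` for `j < k`, and each later `bⱼ` is orthogonal to it; hence the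
unitary matrix `V` with columns `bⱼ` is `diag(I_k, V̂)`. As `bᵢ` is orthogonal to every earlier
vector of the sequence, `(Vᴴ A)ᵢⱼ = ⟪bᵢ, Aⱼ⟫` vanishes for `j + k < i`, so `S = Vᴴ A` is unitary
and `k`-upper Hessenberg.
-/

open Matrix

/-- A matrix is `k`-upper Hessenberg if its entries vanish below the `k`-th subdiagonal. -/
def IsKUpperHessenberg {m : ℕ} (k : ℕ) (R : Matrix (Fin m) (Fin m) ℂ) : Prop :=
  ∀ i j : Fin m, (j : ℕ) + k < (i : ℕ) → R i j = 0

open InnerProductSpace Submodule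

section GramSchmidt

variable {𝕜 E ι : Type*} [RCLike 𝕜] [NormedAddCommGroup E] [InnerProductSpace 𝕜 E]
  [LinearOrder ι] [LocallyFiniteOrderBot ι] [WellFoundedLT ι]

theorem gramSchmidt_eq_self_of_inner_eq_zero {f : ι → E} {i : ι}
    (hf : ∀ j < i, inner 𝕜 (f j) (f i) = 0) :
    gramSchmidt 𝕜 f i = f i := by
  rw [gramSchmidt_def, sub_eq_self]
  refine Finset.sum_eq_zero fun j hj => ?_
  have hspan : span 𝕜 (f '' Set.Iic j) ≤ (𝕜 ∙ f i)ᗮ := by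
    rw [span_le]
    rintro _ ⟨l, hl, rfl⟩
    exact mem_orthogonal_singleton_iff_inner_left.2
      (hf l (lt_of_le_of_lt hl (Finset.mem_Iio.1 hj)))
  rw [starProjection_apply, coe_eq_zero]
  refine orthogonalProjectionOnto_apply_of_mem_orthogonal
    (mem_orthogonal_singleton_iff_inner_right.2 ?_)
  exact mem_orthogonal_singleton_iff_inner_left.1 (hspan (gramSchmidt_mem_span 𝕜 f le_rfl))

theorem gramSchmidtOrthonormalBasis_eq_self_of_inner_eq_zero [Fintype ι]
    [FiniteDimensional 𝕜 E] (h : Module.finrank 𝕜 E = Fintype.card ι) {f : ι → E} {i : ι}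
    (hf : ∀ j < i, inner 𝕜 (f j) (f i) = 0) (hi : ‖f i‖ = 1) :
    gramSchmidtOrthonormalBasis h f i = f i := by
  have hnormed : gramSchmidtNormed 𝕜 f i = f i := by
    simp [gramSchmidtNormed, gramSchmidt_eq_self_of_inner_eq_zero hf, hi]
  have hne : f i ≠ 0 := norm_ne_zero_iff.1 (by simp [hi])
  rw [gramSchmidtOrthonormalBasis_apply h (hnormed ▸ hne), hnormed]

end GramSchmidt

theorem star_basisFun_toMatrix_mul_apply {𝕜 ι κ : Type*} [RCLike 𝕜] [Fintype ι] [DecidableEq ι]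
    (b : OrthonormalBasis ι 𝕜 (EuclideanSpace 𝕜 ι)) (A : Matrix ι κ 𝕜) (i : ι) (j : κ) :
    (star ((EuclideanSpace.basisFun ι 𝕜).toBasis.toMatrix b) * A) i j =
      inner 𝕜 (b i) (WithLp.toLp 2 (Aᵀ j)) := by
  simp [Matrix.mul_apply, Module.Basis.toMatrix_apply, PiLp.inner_apply, mul_comm]

noncomputable def unitVectorsThenColumns {n : ℕ} (k : ℕ) (A : Matrix (Fin n) (Fin n) ℂ)
    (j : Fin n) : EuclideanSpace ℂ (Fin n) :=
  if (j : ℕ) < k then EuclideanSpace.single j 1 else WithLp.toLp 2 (Aᵀ ⟨j - k, by omega⟩)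

theorem exists_unitary_isKUpperHessenberg_star_mul {n : ℕ} (k : ℕ)
    (A : Matrix (Fin n) (Fin n) ℂ) :
    ∃ V ∈ unitaryGroup (Fin n) ℂ,
      (∀ i j : Fin n, (i : ℕ) < k ∨ (j : ℕ) < k → V i j = if i = j then 1 else 0) ∧
      IsKUpperHessenberg k (star V * A) := by
  set w := unitVectorsThenColumns k A
  set b := gramSchmidtOrthonormalBasis finrank_euclideanSpace w
  have hw_single {j : Fin n} (hj : (j : ℕ) < k) : w j = EuclideanSpace.single j 1 := if_pos hj
  have hw_col {i j : Fin n} (hij : (j : ℕ) + k = i) : w i = WithLp.toLp 2 (Aᵀ j) := by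
    simp only [w, unitVectorsThenColumns, if_neg (show ¬ (i : ℕ) < k by omega)]
    congr
    omega
  have hb_perp {i j : Fin n} (hij : i < j) : inner ℂ (b j) (w i) = 0 :=
    gramSchmidtOrthonormalBasis_inv_triangular _ w hij
  have hb_single {j : Fin n} (hj : (j : ℕ) < k) : b j = EuclideanSpace.single j 1 := by
    rw [← hw_single hj]
    refine gramSchmidtOrthonormalBasis_eq_self_of_inner_eq_zero _ (fun l hl => ?_)
      (by simp [hw_single hj])
    rw [hw_single hj, hw_single (lt_trans (Fin.lt_def.1 hl) hj), EuclideanSpace.inner_single_left]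
    simp [hl.ne]
  refine ⟨_, (EuclideanSpace.basisFun (Fin n) ℂ).toMatrix_orthonormalBasis_mem_unitary b, ?_, ?_⟩
  · intro i j hij
    simp only [Module.Basis.toMatrix_apply, OrthonormalBasis.coe_toBasis_repr_apply,
      EuclideanSpace.basisFun_repr]
    by_cases hj : (j : ℕ) < k
    · simp [hb_single hj]
    · have hlt : i < j := by omega
      have h := hb_perp hlt
      rw [hw_single (by omega), EuclideanSpace.inner_single_right] at h
      rw [if_neg hlt.ne]
      simpa using h
  · intro i j hij
    rw [star_basisFun_toMatrix_mul_apply, ← hw_col (i := ⟨j + k, by omega⟩) rfl]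
    exact hb_perp (Fin.lt_def.2 hij)

theorem swap_upper_hessenberg_unitary {n k : ℕ}
    (R U : Matrix (Fin n) (Fin n) ℂ)
    (hR : R ∈ Matrix.unitaryGroup (Fin n) ℂ)
    (hU : U ∈ Matrix.unitaryGroup (Fin n) ℂ) :
    ∃ V S : Matrix (Fin n) (Fin n) ℂ,
      V ∈ Matrix.unitaryGroup (Fin n) ℂ ∧
      S ∈ Matrix.unitaryGroup (Fin n) ℂ ∧
      IsKUpperHessenberg k S ∧
      (∀ i j : Fin n, (i : ℕ) < k ∨ (j : ℕ) < k → V i j = if i = j then 1 else 0) ∧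
      R * U = V * S := by
  obtain ⟨V, hV, hV_block, hS⟩ := exists_unitary_isKUpperHessenberg_star_mul k (R * U)
  refine ⟨V, star V * (R * U), hV, mul_mem (Unitary.star_mem hV) (mul_mem hR hU), hS,
    hV_block, ?_⟩
  rw [← Matrix.mul_assoc, Unitary.mul_star_self_of_mem hV, Matrix.one_mul]
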